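/- Let u = [u₂; u₁] and ũ = [ũ₂; ũ₁] with u₁, u₂, ũ₁, ũ₂ ∈ ℂⁿ and ‖u₁‖ = ‖ũ₁‖ = 1. Then sin∠(u₁, ũ₁) ≤ min{‖u‖, ‖ũ‖} · sin∠(u, ũ), where for nonzero vectors a, b, sin∠(a, b) := min over scalars α of ‖a/‖a‖ − α b‖. -/

import Mathlib

open Matrix Polynomial

/-- Euclidean norm of a complex vector. -/
noncomputable def vnorm {ι : Type*} [Fintype ι] (x : ι → ℂ) : ℝ :=
  Real.sqrt (∑ i, ‖x i‖ ^ 2)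

/-- Spectral norm (operator 2-norm) of a complex matrix. -/
noncomputable def spec {ι κ : Type*} [Fintype ι] [Fintype κ] [DecidableEq κ]
    (A : Matrix ι κ ℂ) : ℝ :=
  ‖LinearMap.toContinuousLinearMap (Matrix.toEuclideanLin A)‖

/-- Sine of the angle between two vectors: distance from a/‖a‖ to span{b}. -/
noncomputable def sAngle {ι : Type*} [Fintype ι] (a b : ι → ℂ) : ℝ :=
  ⨅ α : ℂ, vnorm ((vnorm a)⁻¹ • a - α • b)

/-! For a unit vector `x`, the distance from `x` to `span {y}` is `‖x - P x‖` with `P` the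
orthogonal projection onto that line, and Pythagoras gives its square as
`1 - |⟪x, y⟫|² / ‖y‖²`; hence the sine of the angle is symmetric in its two arguments.
With `N = ‖u‖ ≥ ‖u₁‖ = 1`, the bottom block of `N⁻¹ u - α ũ` is `N⁻¹ (u₁ - N α ũ₁)`, so
`sin∠(u₁, ũ₁) ≤ ‖u‖ sin∠(u, ũ)`; swapping the roles of `u` and `ũ` by symmetry gives the
bound with `‖ũ‖`. -/

section InnerProductSpace

open Submodule

variable {𝕜 E : Type*} [RCLike 𝕜] [NormedAddCommGroup E] [InnerProductSpace 𝕜 E]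

local notation "⟪" x ", " y "⟫" => @inner 𝕜 _ _ x y

theorem iInf_norm_sub_smul_eq_norm_sub_starProjection (x y : E) :
    ⨅ α : 𝕜, ‖x - α • y‖ = ‖x - (𝕜 ∙ y).starProjection x‖ := by
  let smulY : 𝕜 → 𝕜 ∙ y := fun α => ⟨α • y, mem_span_singleton.2 ⟨α, rfl⟩⟩
  rw [starProjection_minimal]
  refine Function.Surjective.iInf_comp (f := smulY) ?_ fun z => ‖x - z‖
  rintro ⟨z, hz⟩
  obtain ⟨α, rfl⟩ := mem_span_singleton.1 hz
  exact ⟨α, rfl⟩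

theorem norm_starProjection_singleton (x y : E) :
    ‖(𝕜 ∙ y).starProjection x‖ = ‖⟪y, x⟫‖ / ‖y‖ := by
  rcases eq_or_ne y 0 with rfl | hy
  · simp
  rw [starProjection_singleton, norm_smul, norm_div, RCLike.norm_ofReal, abs_sq]
  field_simp [norm_ne_zero_iff.2 hy]

theorem sq_iInf_norm_sub_smul {x : E} (hx : ‖x‖ = 1) (y : E) :
    (⨅ α : 𝕜, ‖x - α • y‖) ^ 2 = 1 - (‖⟪y, x⟫‖ / ‖y‖) ^ 2 := by
  have h := norm_sq_eq_add_norm_sq_starProjection x (𝕜 ∙ y)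
  rw [starProjection_orthogonal', hx, norm_starProjection_singleton] at h
  rw [iInf_norm_sub_smul_eq_norm_sub_starProjection]
  simp only [_root_.sub_apply, one_apply_eq_self] at h
  linarith

variable (𝕜) in
noncomputable def sinAngle (a b : E) : ℝ :=
  ⨅ α : 𝕜, ‖((‖a‖⁻¹ : ℝ) : 𝕜) • a - α • b‖

theorem sinAngle_sq {a : E} (ha : a ≠ 0) (b : E) :
    sinAngle 𝕜 a b ^ 2 = 1 - (‖⟪a, b⟫‖ / (‖a‖ * ‖b‖)) ^ 2 := by
  have hna : ‖a‖ ≠ 0 := norm_ne_zero_iff.2 ha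
  have hunit : ‖((‖a‖⁻¹ : ℝ) : 𝕜) • a‖ = 1 := by
    rw [norm_smul, RCLike.norm_ofReal, abs_inv, abs_norm, inv_mul_cancel₀ hna]
  rw [sinAngle, sq_iInf_norm_sub_smul hunit, inner_smul_right, norm_mul, RCLike.norm_ofReal,
    abs_inv, abs_norm, ← norm_inner_symm]
  field_simp

theorem sinAngle_nonneg (a b : E) : 0 ≤ sinAngle 𝕜 a b :=
  Real.iInf_nonneg fun _ => norm_nonneg _

theorem sinAngle_comm {a b : E} (ha : a ≠ 0) (hb : b ≠ 0) :
    sinAngle 𝕜 a b = sinAngle 𝕜 b a := by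
  rw [← sq_eq_sq₀ (sinAngle_nonneg a b) (sinAngle_nonneg b a), sinAngle_sq ha, sinAngle_sq hb,
    norm_inner_symm, mul_comm ‖b‖]

end InnerProductSpace

section Blocks

variable {ι κ : Type*} [Fintype ι] [Fintype κ]

theorem vnorm_eq_norm_toLp (x : ι → ℂ) : vnorm x = ‖WithLp.toLp 2 x‖ :=
  (EuclideanSpace.norm_eq _).symm

theorem vnorm_smul {R : Type*} [NormedField R] [NormedSpace R ℂ] (c : R) (x : ι → ℂ) :
    vnorm (c • x) = ‖c‖ * vnorm x := by
  rw [vnorm_eq_norm_toLp, vnorm_eq_norm_toLp, WithLp.toLp_smul, norm_smul]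

theorem vnorm_le_vnorm_sumElim (x : ι → ℂ) (y : κ → ℂ) : vnorm y ≤ vnorm (Sum.elim x y) := by
  unfold vnorm
  gcongr
  rw [Fintype.sum_sum_type]
  simp only [Sum.elim_inl, Sum.elim_inr]
  exact le_add_of_nonneg_left (by positivity)

theorem one_le_vnorm_sumElim {x : ι → ℂ} {y : κ → ℂ} (hy : vnorm y = 1) :
    1 ≤ vnorm (Sum.elim x y) :=
  hy ▸ vnorm_le_vnorm_sumElim x y

theorem sAngle_nonneg (a b : ι → ℂ) : 0 ≤ sAngle a b :=
  Real.iInf_nonneg fun _ => Real.sqrt_nonneg _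

theorem sAngle_eq_sinAngle (a b : ι → ℂ) :
    sAngle a b = sinAngle ℂ (WithLp.toLp 2 a) (WithLp.toLp 2 b) := by
  simp only [sAngle, sinAngle, vnorm_eq_norm_toLp, WithLp.toLp_sub, WithLp.toLp_smul,
    RCLike.real_smul_eq_coe_smul (K := ℂ)]

theorem sAngle_comm {a b : ι → ℂ} (ha : vnorm a ≠ 0) (hb : vnorm b ≠ 0) :
    sAngle a b = sAngle b a := by
  rw [vnorm_eq_norm_toLp, norm_ne_zero_iff] at ha hb
  rw [sAngle_eq_sinAngle, sAngle_eq_sinAngle, sinAngle_comm ha hb]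

theorem sAngle_le_vnorm {a : ι → ℂ} (ha : vnorm a = 1) (b : ι → ℂ) (α : ℂ) :
    sAngle a b ≤ vnorm (a - α • b) := by
  refine (ciInf_le ⟨0, ?_⟩ α).trans_eq (by rw [ha, inv_one, one_smul])
  rintro _ ⟨β, rfl⟩
  exact Real.sqrt_nonneg _

theorem sAngle_le_vnorm_mul_sAngle_sumElim {u₂ ũ₂ : ι → ℂ} {u₁ ũ₁ : κ → ℂ} (hu₁ : vnorm u₁ = 1) :
    sAngle u₁ ũ₁ ≤ vnorm (Sum.elim u₂ u₁) * sAngle (Sum.elim u₂ u₁) (Sum.elim ũ₂ ũ₁) := by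
  set N := vnorm (Sum.elim u₂ u₁)
  have hN : 0 < N := one_pos.trans_le (one_le_vnorm_sumElim hu₁)
  conv_rhs => rw [sAngle, Real.mul_iInf_of_nonneg hN.le]
  refine le_ciInf fun α => ?_
  have hsplit : N⁻¹ • Sum.elim u₂ u₁ - α • Sum.elim ũ₂ ũ₁ =
      Sum.elim (N⁻¹ • u₂ - α • ũ₂) (N⁻¹ • u₁ - α • ũ₁) := by
    ext (i | i) <;> rfl
  have hscale : u₁ - ((N : ℂ) * α) • ũ₁ = N • (N⁻¹ • u₁ - α • ũ₁) := by
    rw [smul_sub, smul_inv_smul₀ hN.ne', mul_smul, Complex.coe_smul]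
  calc sAngle u₁ ũ₁ ≤ vnorm (u₁ - ((N : ℂ) * α) • ũ₁) := sAngle_le_vnorm hu₁ ũ₁ _
    _ = N * vnorm (N⁻¹ • u₁ - α • ũ₁) := by rw [hscale, vnorm_smul, Real.norm_of_nonneg hN.le]
    _ ≤ N * vnorm (N⁻¹ • Sum.elim u₂ u₁ - α • Sum.elim ũ₂ ũ₁) := by
      rw [hsplit]
      exact mul_le_mul_of_nonneg_left (vnorm_le_vnorm_sumElim _ _) hN.le

end Blocks

theorem stmt6 {n : ℕ} (u2 u1 tu2 tu1 : Fin n → ℂ)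
    (h1 : vnorm u1 = 1) (h2 : vnorm tu1 = 1) :
    sAngle u1 tu1 ≤
      min (vnorm (Sum.elim u2 u1)) (vnorm (Sum.elim tu2 tu1)) *
        sAngle (Sum.elim u2 u1) (Sum.elim tu2 tu1) := by
  have hu : vnorm (Sum.elim u2 u1) ≠ 0 :=
    (one_pos.trans_le (one_le_vnorm_sumElim h1)).ne'
  have hũ : vnorm (Sum.elim tu2 tu1) ≠ 0 :=
    (one_pos.trans_le (one_le_vnorm_sumElim h2)).ne'
  have hsymm : sAngle tu1 u1 ≤
      vnorm (Sum.elim tu2 tu1) * sAngle (Sum.elim tu2 tu1) (Sum.elim u2 u1) :=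
    sAngle_le_vnorm_mul_sAngle_sumElim h2
  rw [sAngle_comm (by rw [h2]; exact one_ne_zero) (by rw [h1]; exact one_ne_zero),
    sAngle_comm hũ hu] at hsymm
  rw [min_mul_of_nonneg _ _ (sAngle_nonneg _ _)]
  exact le_min (sAngle_le_vnorm_mul_sAngle_sumElim h1) hsymm
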